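/- For every real μ with μ > γ, both K(μ) = μ²M + μC + K and 2μM + C are positive definite Hermitian matrices. -/

import Mathlib

/-!
When `M`, `C`, `K` are positive definite, every `r(x)` is `≤ 0`, so `γ` is a genuine supremum and
`μ > γ` gives `μ > r(x)` for each `x ≠ 0`. For a real quadratic `m λ² + c λ + k` with `m > 0`, a
real `μ` to the right of its `+`-root (or of `-c/(2m)` when the roots are not real) makes both the
quadratic and its derivative `2mμ + c` positive. With `m, c, k = m(x), c(x), k(x)` these are
`x* K(μ) x` and `x* (2μM + C) x`.
-/

open Matrix
open scoped ComplexOrder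

noncomputable section

/-- The value `x* P x` (which is real for Hermitian `P`), taken as its real part. -/
def qf {n : ℕ} (P : Matrix (Fin n) (Fin n) ℂ) (x : Fin n → ℂ) : ℝ :=
  (star x ⬝ᵥ P.mulVec x).re

/-- The (positive semidefinite) square root of a positive semidefinite matrix,
extended by `0` to all matrices. -/
def msqrt {n : ℕ} (P : Matrix (Fin n) (Fin n) ℂ) : Matrix (Fin n) (Fin n) ℂ :=
  open scoped Classical in
  if h : P.PosSemidef then
    (h.1.eigenvectorUnitary : Matrix (Fin n) (Fin n) ℂ) *
      diagonal ((↑) ∘ Real.sqrt ∘ h.1.eigenvalues) *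
      (star h.1.eigenvectorUnitary : Matrix (Fin n) (Fin n) ℂ)
  else 0

/-- The quadratic matrix pencil `K(λ) = λ²M + λC + K`. -/
def Kpen {n : ℕ} (M C K : Matrix (Fin n) (Fin n) ℂ) (lam : ℂ) :
    Matrix (Fin n) (Fin n) ℂ :=
  lam ^ 2 • M + lam • C + K

/-- The real part of the `+`-root of the scalar quadratic
`m(x) λ² + c(x) λ + k(x) = 0`. -/
def rfun {n : ℕ} (M C K : Matrix (Fin n) (Fin n) ℂ) (x : Fin n → ℂ) : ℝ :=
  open scoped Classical in
  if (qf C x) ^ 2 ≥ 4 * qf M x * qf K x then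
    (-(qf C x) + Real.sqrt ((qf C x) ^ 2 - 4 * qf M x * qf K x)) / (2 * qf M x)
  else
    -(qf C x) / (2 * qf M x)

/-- The spectral-shift bound `γ = sup_{x ≠ 0} Re p₊(x)`. -/
def gam {n : ℕ} (M C K : Matrix (Fin n) (Fin n) ℂ) : ℝ :=
  sSup {y : ℝ | ∃ x : Fin n → ℂ, x ≠ 0 ∧ rfun M C K x = y}

/-- The phase-space matrix `A = [[0, K½ M⁻½], [−M⁻½ K½, −M⁻½ C M⁻½]]`. -/
def phaseA {n : ℕ} (M C K : Matrix (Fin n) (Fin n) ℂ) :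
    Matrix (Fin n ⊕ Fin n) (Fin n ⊕ Fin n) ℂ :=
  fromBlocks 0 (msqrt K * (msqrt M)⁻¹)
    (-((msqrt M)⁻¹ * msqrt K)) (-((msqrt M)⁻¹ * C * (msqrt M)⁻¹))

/-- The operator norm of a matrix with respect to the Euclidean norm. -/
def opNorm {m : Type*} [Fintype m] [DecidableEq m] (A : Matrix m m ℂ) : ℝ :=
  ‖toEuclideanCLM (𝕜 := ℂ) A‖

/-- The block matrix `L(μ) = [[K½ K(μ)⁻½, 0], [μ M½ K(μ)⁻½, I]]`. -/
def Lmat {n : ℕ} (M C K : Matrix (Fin n) (Fin n) ℂ) (mu : ℝ) :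
    Matrix (Fin n ⊕ Fin n) (Fin n ⊕ Fin n) ℂ :=
  fromBlocks (msqrt K * (msqrt (Kpen M C K (mu : ℂ)))⁻¹) 0
    ((mu : ℂ) • (msqrt M * (msqrt (Kpen M C K (mu : ℂ)))⁻¹)) 1

def quadRoot (m c k : ℝ) : ℝ :=
  if c ^ 2 ≥ 4 * m * k then (-c + √(c ^ 2 - 4 * m * k)) / (2 * m) else -c / (2 * m)

section QuadRoot

variable {m c k μ : ℝ}

lemma div_le_quadRoot (hm : 0 < m) : -c / (2 * m) ≤ quadRoot m c k := by
  unfold quadRoot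
  split_ifs
  · gcongr
    exact le_add_of_nonneg_right (Real.sqrt_nonneg _)
  · rfl

lemma quadRoot_nonpos (hm : 0 < m) (hc : 0 ≤ c) (hk : 0 ≤ k) : quadRoot m c k ≤ 0 := by
  unfold quadRoot
  split_ifs
  · have : √(c ^ 2 - 4 * m * k) ≤ c := Real.sqrt_le_iff.mpr ⟨hc, by nlinarith⟩
    exact div_nonpos_of_nonpos_of_nonneg (by linarith) (by positivity)
  · exact div_nonpos_of_nonpos_of_nonneg (by linarith) (by positivity)

lemma linear_pos_of_quadRoot_lt (hm : 0 < m) (h : quadRoot m c k < μ) : 0 < 2 * μ * m + c := by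
  have := (div_lt_iff₀ (by positivity)).mp ((div_le_quadRoot hm).trans_lt h)
  linarith

/-- With `t = 2mμ + c`, `4m (mμ² + cμ + k) = t² - (c² - 4mk)`, and `t` exceeds `√(c² - 4mk)`. -/
lemma quadratic_pos_of_quadRoot_lt (hm : 0 < m) (h : quadRoot m c k < μ) :
    0 < μ ^ 2 * m + μ * c + k := by
  have ht := linear_pos_of_quadRoot_lt hm h
  unfold quadRoot at h
  split_ifs at h with hd
  · set s := √(c ^ 2 - 4 * m * k)
    have hs : s ^ 2 = c ^ 2 - 4 * m * k := Real.sq_sqrt (by linarith)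
    have hst : s < 2 * μ * m + c := by
      have := (div_lt_iff₀ (by positivity)).mp h
      linarith
    nlinarith [Real.sqrt_nonneg (c ^ 2 - 4 * m * k)]
  · nlinarith

end QuadRoot

section QuadraticForm

variable {n : ℕ}

lemma rfun_eq_quadRoot (M C K : Matrix (Fin n) (Fin n) ℂ) (x : Fin n → ℂ) :
    rfun M C K x = quadRoot (qf M x) (qf C x) (qf K x) := rfl

lemma qf_add (A B : Matrix (Fin n) (Fin n) ℂ) (x : Fin n → ℂ) :
    qf (A + B) x = qf A x + qf B x := by
  simp only [qf, add_mulVec, dotProduct_add, Complex.add_re]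

lemma qf_ofReal_smul (r : ℝ) (A : Matrix (Fin n) (Fin n) ℂ) (x : Fin n → ℂ) :
    qf ((r : ℂ) • A) x = r * qf A x := by
  simp only [qf, smul_mulVec, dotProduct_smul, smul_eq_mul, Complex.re_ofReal_mul]

lemma qf_Kpen (M C K : Matrix (Fin n) (Fin n) ℂ) (μ : ℝ) (x : Fin n → ℂ) :
    qf (Kpen M C K μ) x = μ ^ 2 * qf M x + μ * qf C x + qf K x := by
  rw [Kpen, ← Complex.ofReal_pow, qf_add, qf_add, qf_ofReal_smul, qf_ofReal_smul]

end QuadraticForm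

namespace Matrix

variable {n : ℕ}

lemma IsHermitian.Kpen {M C K : Matrix (Fin n) (Fin n) ℂ} (hM : M.IsHermitian)
    (hC : C.IsHermitian) (hK : K.IsHermitian) (μ : ℝ) : (Kpen M C K μ).IsHermitian :=
  ((hM.smul (IsSelfAdjoint.pow (Complex.conj_ofReal μ) 2)).add
    (hC.smul (Complex.conj_ofReal μ))).add hK

lemma IsHermitian.dotProduct_mulVec_eq_qf {A : Matrix (Fin n) (Fin n) ℂ} (hA : A.IsHermitian)
    (x : Fin n → ℂ) : star x ⬝ᵥ A *ᵥ x = qf A x :=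
  Complex.ext rfl (hA.im_star_dotProduct_mulVec_self x)

lemma PosDef.qf_pos {A : Matrix (Fin n) (Fin n) ℂ} (hA : A.PosDef) {x : Fin n → ℂ} (hx : x ≠ 0) :
    0 < qf A x :=
  hA.re_dotProduct_pos hx

lemma PosDef.of_qf_pos {A : Matrix (Fin n) (Fin n) ℂ} (hA : A.IsHermitian)
    (h : ∀ x ≠ 0, 0 < qf A x) : A.PosDef :=
  .of_dotProduct_mulVec_pos hA fun x hx => by
    rw [hA.dotProduct_mulVec_eq_qf]
    exact_mod_cast h x hx

end Matrix

lemma rfun_le_gam {n : ℕ} {M C K : Matrix (Fin n) (Fin n) ℂ} (hM : M.PosDef) (hC : C.PosDef)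
    (hK : K.PosDef) {x : Fin n → ℂ} (hx : x ≠ 0) : rfun M C K x ≤ gam M C K := by
  refine le_csSup ⟨0, ?_⟩ ⟨x, hx, rfl⟩
  rintro _ ⟨y, hy, rfl⟩
  exact quadRoot_nonpos (hM.qf_pos hy) (hC.qf_pos hy).le (hK.qf_pos hy).le

theorem posDef_of_gt_gamma_general {n : ℕ}
    (M C K : Matrix (Fin n) (Fin n) ℂ)
    (hM : M.PosDef) (hC : C.PosDef) (hK : K.PosDef) :
    ∀ mu : ℝ, gam M C K < mu →
      (Kpen M C K (mu : ℂ)).PosDef ∧ (((2 * mu : ℝ) : ℂ) • M + C).PosDef := by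
  intro mu hmu
  have hroot : ∀ x ≠ 0, quadRoot (qf M x) (qf C x) (qf K x) < mu := fun x hx =>
    rfun_eq_quadRoot M C K x ▸ (rfun_le_gam hM hC hK hx).trans_lt hmu
  constructor
  · refine .of_qf_pos (hM.1.Kpen hC.1 hK.1 mu) fun x hx => ?_
    rw [qf_Kpen]
    exact quadratic_pos_of_quadRoot_lt (hM.qf_pos hx) (hroot x hx)
  · refine .of_qf_pos ((hM.1.smul (Complex.conj_ofReal _)).add hC.1) fun x hx => ?_
    rw [qf_add, qf_ofReal_smul]
    exact linear_pos_of_quadRoot_lt (hM.qf_pos hx) (hroot x hx)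

/-- For every real `μ > γ`, both `K(μ)` and `2μM + C` are positive definite. -/
theorem posDef_of_gt_gamma {n : ℕ} (hn : 1 ≤ n)
    (M C K : Matrix (Fin n) (Fin n) ℂ)
    (hM : M.PosDef) (hC : C.PosDef) (hK : K.PosDef) :
    ∀ mu : ℝ, gam M C K < mu →
      (Kpen M C K (mu : ℂ)).PosDef ∧ (((2 * mu : ℝ) : ℂ) • M + C).PosDef :=
  posDef_of_gt_gamma_general M C K hM hC hK

end
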